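/- arXiv:2108.12991 — 6 statements merged into one kernel-verified Lean document; each statement's English description precedes it below -/
import Mathlib

section
/- Let A ∈ SL(2,ℤ) be elliptic, i.e. |Tr(A)| < 2. Then A is conjugate in SL(2,ℤ) to one of the six matrices R̃_{1/4} = [[0,-1],[1,0]], R̃_{3/4} = [[0,1],[-1,0]], R̃_{1/6} = [[1,-1],[1,0]], R̃_{1/3} = [[0,-1],[1,-1]], R̃_{2/3} = [[-1,1],[-1,0]], R̃_{5/6} = [[0,1],[-1,1]]. -/
/-- The special linear group `SL(2,ℤ)`. -/
abbrev SL2Z := Matrix.SpecialLinearGroup (Fin 2) ℤ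

/-- `A ∈ SL(2,ℤ)` is conjugate in `SL(2,ℤ)` to the matrix `B`. -/
def IsConjToZ (A : SL2Z) (B : Matrix (Fin 2) (Fin 2) ℤ) : Prop :=
  ∃ P : SL2Z, A.val = P.val * B * (P⁻¹).val

namespace EllipticAux

/-- conjugacy in SL(2,ℤ) -/
def CR (A B : SL2Z) : Prop := ∃ P : SL2Z, A = P * B * P⁻¹

lemma CR.refl (A : SL2Z) : CR A A := ⟨1, by simp⟩

lemma CR.symm {A B : SL2Z} (h : CR A B) : CR B A := by
  obtain ⟨P, h⟩ := h; exact ⟨P⁻¹, by rw [h]; group⟩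

lemma CR.trans {A B C : SL2Z} (h1 : CR A B) (h2 : CR B C) : CR A C := by
  obtain ⟨P, h1⟩ := h1; obtain ⟨Q, h2⟩ := h2
  exact ⟨P * Q, by rw [h1, h2]; group⟩

lemma CR.inv {A B : SL2Z} (h : CR A⁻¹ B) : CR A B⁻¹ := by
  obtain ⟨P, h⟩ := h
  refine ⟨P, ?_⟩
  have := congrArg (·⁻¹) h
  simpa [mul_assoc] using this

def R14 : SL2Z := ⟨!![0,-1;1,0], by norm_num [Matrix.det_fin_two_of]⟩
def R34 : SL2Z := ⟨!![0,1;-1,0], by norm_num [Matrix.det_fin_two_of]⟩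
def R16 : SL2Z := ⟨!![1,-1;1,0], by norm_num [Matrix.det_fin_two_of]⟩
def R13 : SL2Z := ⟨!![0,-1;1,-1], by norm_num [Matrix.det_fin_two_of]⟩
def R23 : SL2Z := ⟨!![-1,1;-1,0], by norm_num [Matrix.det_fin_two_of]⟩
def R56 : SL2Z := ⟨!![0,1;-1,1], by norm_num [Matrix.det_fin_two_of]⟩

lemma R14_val : R14.val = !![0,-1;1,0] := rfl
lemma R34_val : R34.val = !![0,1;-1,0] := rfl
lemma R16_val : R16.val = !![1,-1;1,0] := rfl
lemma R13_val : R13.val = !![0,-1;1,-1] := rfl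
lemma R23_val : R23.val = !![-1,1;-1,0] := rfl
lemma R56_val : R56.val = !![0,1;-1,1] := rfl

def Goal (A : SL2Z) : Prop :=
  CR A R14 ∨ CR A R34 ∨ CR A R16 ∨ CR A R13 ∨ CR A R23 ∨ CR A R56

lemma Goal.mono {A B : SL2Z} (h : CR A B) (hB : Goal B) : Goal A := by
  rcases hB with h'|h'|h'|h'|h'|h'
  · exact Or.inl (h.trans h')
  · exact Or.inr (Or.inl (h.trans h'))
  · exact Or.inr (Or.inr (Or.inl (h.trans h')))
  · exact Or.inr (Or.inr (Or.inr (Or.inl (h.trans h'))))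
  · exact Or.inr (Or.inr (Or.inr (Or.inr (Or.inl (h.trans h')))))
  · exact Or.inr (Or.inr (Or.inr (Or.inr (Or.inr (h.trans h')))))

lemma sl2_ext {A B : SL2Z} {M : Matrix (Fin 2) (Fin 2) ℤ} (h : A.val = M)
    (hB : B.val = M) : A = B := Subtype.ext (h.trans hB.symm)

lemma inv_val (A : SL2Z) :
    (A⁻¹).val = !![A.val 1 1, -A.val 0 1; -A.val 1 0, A.val 0 0] := by
  rw [Matrix.SpecialLinearGroup.SL2_inv_expl]
  ext i j
  fin_cases i <;> fin_cases j <;> rfl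

lemma R14_inv : R14⁻¹ = R34 := by
  apply sl2_ext (inv_val R14)
  ext i j; fin_cases i <;> fin_cases j <;> rfl

lemma R34_inv : R34⁻¹ = R14 := by
  apply sl2_ext (inv_val R34)
  ext i j; fin_cases i <;> fin_cases j <;> rfl

lemma R16_inv : R16⁻¹ = R56 := by
  apply sl2_ext (inv_val R16)
  ext i j; fin_cases i <;> fin_cases j <;> rfl

lemma R56_inv : R56⁻¹ = R16 := by
  apply sl2_ext (inv_val R56)
  ext i j; fin_cases i <;> fin_cases j <;> rfl

lemma R13_inv : R13⁻¹ = R23 := by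
  apply sl2_ext (inv_val R13)
  ext i j; fin_cases i <;> fin_cases j <;> rfl

lemma R23_inv : R23⁻¹ = R13 := by
  apply sl2_ext (inv_val R23)
  ext i j; fin_cases i <;> fin_cases j <;> rfl

lemma Goal.of_inv {A : SL2Z} (h : Goal A⁻¹) : Goal A := by
  rcases h with h'|h'|h'|h'|h'|h'
  · exact Or.inr (Or.inl (R14_inv ▸ h'.inv))
  · exact Or.inl (R34_inv ▸ h'.inv)
  · exact Or.inr (Or.inr (Or.inr (Or.inr (Or.inr (R16_inv ▸ h'.inv)))))
  · exact Or.inr (Or.inr (Or.inr (Or.inr (Or.inl (R13_inv ▸ h'.inv)))))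
  · exact Or.inr (Or.inr (Or.inr (Or.inl (R23_inv ▸ h'.inv))))
  · exact Or.inr (Or.inr (Or.inl (R56_inv ▸ h'.inv)))

/-- the translation matrix T^m -/
def Tm (m : ℤ) : SL2Z := ⟨!![1, m; 0, 1], by norm_num [Matrix.det_fin_two_of]⟩

lemma Tm_inv (m : ℤ) : (Tm m)⁻¹ = Tm (-m) := by
  apply sl2_ext (inv_val (Tm m))
  ext i j; fin_cases i <;> fin_cases j <;> rfl

lemma Tm_conj (m : ℤ) (A : SL2Z) :
    (Tm m * A * (Tm m)⁻¹).val =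
      !![A.val 0 0 + m * A.val 1 0,
         A.val 0 1 + m * (A.val 1 1 - A.val 0 0) - m * m * A.val 1 0;
         A.val 1 0, A.val 1 1 - m * A.val 1 0] := by
  rw [Tm_inv]
  rw [Matrix.SpecialLinearGroup.coe_mul, Matrix.SpecialLinearGroup.coe_mul]
  rw [show (Tm m).val = !![1,m;0,1] from rfl, show (Tm (-m)).val = !![1,-m;0,1] from rfl,
    Matrix.eta_fin_two A.val]
  rw [Matrix.mul_fin_two, Matrix.mul_fin_two]
  ext i j
  fin_cases i <;> fin_cases j <;> simp <;> ring

lemma S_conj (A : SL2Z) :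
    (R14 * A * R14⁻¹).val =
      !![A.val 1 1, -A.val 1 0; -A.val 0 1, A.val 0 0] := by
  rw [R14_inv]
  rw [Matrix.SpecialLinearGroup.coe_mul, Matrix.SpecialLinearGroup.coe_mul]
  rw [show (R14).val = !![0,-1;1,0] from rfl, show (R34).val = !![0,1;-1,0] from rfl,
    Matrix.eta_fin_two A.val]
  rw [Matrix.mul_fin_two, Matrix.mul_fin_two]
  ext i j
  fin_cases i <;> fin_cases j <;> simp <;> ring

lemma det_entries (A : SL2Z) : A.val 0 0 * A.val 1 1 - A.val 0 1 * A.val 1 0 = 1 := by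
  have := A.2
  rwa [Matrix.det_fin_two] at this

/- arithmetic helper lemmas -/
lemma arith1 {a d : ℤ} (h1 : -1 ≤ a + d) (h2 : a + d ≤ 1) : a * d ≤ 0 := by
  nlinarith [sq_nonneg (a - d), sq_nonneg (a + d)]

lemma arith2 {b c : ℤ} (hc : 0 < c) (h : b * c ≤ -1) : b ≤ -1 := by
  by_contra hb
  push_neg at hb
  nlinarith [mul_nonneg (by omega : (0:ℤ) ≤ b) hc.le]

lemma arith3 {a d b c : ℤ} (hdet : a * d - b * c = 1) (hc : 0 < c) (hcb : c ≤ -b)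
    (h1 : -c ≤ d - a) (h2 : d - a < c) (h3 : -1 ≤ a + d) (h4 : a + d ≤ 1) : c = 1 := by
  have h5 : 4 * (c * (-b)) = 4 - (a + d)^2 + (d - a)^2 := by linear_combination 4 * hdet
  have h6 : 3 * c^2 ≤ 4 := by
    nlinarith [sq_nonneg (a + d), sq_le_sq' h1 h2.le, mul_le_mul_of_nonneg_left hcb hc.le]
  have h7 : c ≤ 1 := by nlinarith [sq_nonneg (c - 1)]
  omega

set_option maxHeartbeats 1000000 in
lemma reduce : ∀ n : ℕ, ∀ A : SL2Z,
    |A.val 0 0 + A.val 1 1| ≤ 1 → A.val 1 0 = (n : ℤ) → 0 < n → Goal A := by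
  intro n
  induction n using Nat.strong_induction_on with
  | _ n ih =>
    intro A htr hc hn
    have hcpos : (0 : ℤ) < (n : ℤ) := by exact_mod_cast hn
    set a := A.val 0 0 with ha
    set b := A.val 0 1 with hb
    set d := A.val 1 1 with hd
    set c : ℤ := (n : ℤ) with hcz
    have hdet : a * d - b * c = 1 := by
      have := det_entries A; rw [hc] at this; exact this
    have htrab := abs_le.mp htr
    -- choose translation amount
    set m : ℤ := (d - a + c) / (2 * c) with hm
    set r : ℤ := (d - a + c) % (2 * c) with hr
    have hr0 : 0 ≤ r := by rw [hr]; exact Int.emod_nonneg _ (by omega)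
    have hr2 : r < 2 * c := by rw [hr]; exact Int.emod_lt_of_pos _ (by omega)
    have heq : 2 * c * m + r = d - a + c := by rw [hm, hr]; exact Int.mul_ediv_add_emod _ _
    -- conjugate by Tm m
    set A' : SL2Z := Tm m * A * (Tm m)⁻¹ with hA'def
    have hCR : CR A A' := CR.symm ⟨Tm m, rfl⟩
    set a' : ℤ := a + m * c with ha'
    set b' : ℤ := b + m * (d - a) - m * m * c with hb'
    set d' : ℤ := d - m * c with hd'
    have hA' : A'.val = !![a', b'; c, d'] := by
      rw [hA'def, Tm_conj, ← ha, ← hb, ← hd, hc, ha', hb', hd']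
    have hA'00 : A'.val 0 0 = a' := by rw [hA']; simp
    have hA'01 : A'.val 0 1 = b' := by rw [hA']; simp
    have hA'10 : A'.val 1 0 = c := by rw [hA']; simp
    have hA'11 : A'.val 1 1 = d' := by rw [hA']; simp
    have hdet' : a' * d' - b' * c = 1 := by
      have := det_entries A'
      rw [hA'00, hA'01, hA'10, hA'11] at this
      exact this
    have hsum : a' + d' = a + d := by rw [ha', hd']; ring
    have htr1 : -1 ≤ a' + d' := by omega
    have htr2 : a' + d' ≤ 1 := by omega
    have hB' : d' - a' = r - c := by rw [ha', hd']; linear_combination - heq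
    have hB'lb : -c ≤ d' - a' := by omega
    have hB'ub : d' - a' < c := by omega
    have had' : a' * d' ≤ 0 := arith1 htr1 htr2
    have hbneg : b' ≤ -1 := arith2 hcpos (by linarith)
    rcases lt_or_ge (-b') c with hcase | hcase
    · -- swap via S and recurse on smaller lower-left entry
      set A'' : SL2Z := R14 * A' * R14⁻¹ with hA''def
      have hCR2 : CR A' A'' := CR.symm ⟨R14, rfl⟩
      have hA'' : A''.val = !![d', -c; -b', a'] := by
        rw [hA''def, S_conj, hA'00, hA'01, hA'10, hA'11]
      have h00 : A''.val 0 0 = d' := by rw [hA'']; simp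
      have h10 : A''.val 1 0 = -b' := by rw [hA'']; simp
      have h11 : A''.val 1 1 = a' := by rw [hA'']; simp
      have hn'' : A''.val 1 0 = ((-b').toNat : ℤ) := by rw [h10]; omega
      have hlt : (-b').toNat < n := by omega
      have hpos : 0 < (-b').toNat := by omega
      have htr'' : |A''.val 0 0 + A''.val 1 1| ≤ 1 := by
        rw [h00, h11]
        exact abs_le.mpr ⟨by omega, by omega⟩
      exact Goal.mono (hCR.trans hCR2) (ih _ hlt A'' htr'' hn'' hpos)
    · -- reduced: c = 1, identify the matrix
      have hc1 : c = 1 := arith3 hdet' hcpos hcase hB'lb hB'ub htr1 htr2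
      have hvals : (a' = 0 ∧ d' = 0) ∨ (a' = 1 ∧ d' = 0) ∨ (a' = 0 ∧ d' = -1) := by omega
      rcases hvals with ⟨h1, h2⟩ | ⟨h1, h2⟩ | ⟨h1, h2⟩
      · have hbv : b' = -1 := by rw [h1, h2, hc1] at hdet'; omega
        have hR : A' = R14 := sl2_ext (by rw [hA', h1, h2, hbv, hc1]) R14_val
        refine Goal.mono hCR ?_
        rw [hR]
        exact Or.inl (CR.refl _)
      · have hbv : b' = -1 := by rw [h1, h2, hc1] at hdet'; omega
        have hR : A' = R16 := sl2_ext (by rw [hA', h1, h2, hbv, hc1]) R16_val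
        refine Goal.mono hCR ?_
        rw [hR]
        exact Or.inr (Or.inr (Or.inl (CR.refl _)))
      · have hbv : b' = -1 := by rw [h1, h2, hc1] at hdet'; omega
        have hR : A' = R13 := sl2_ext (by rw [hA', h1, h2, hbv, hc1]) R13_val
        refine Goal.mono hCR ?_
        rw [hR]
        exact Or.inr (Or.inr (Or.inr (Or.inl (CR.refl _))))

lemma goal_isConj {A : SL2Z} (h : Goal A) :
    IsConjToZ A !![0, -1; 1, 0] ∨ IsConjToZ A !![0, 1; -1, 0] ∨
    IsConjToZ A !![1, -1; 1, 0] ∨ IsConjToZ A !![0, -1; 1, -1] ∨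
    IsConjToZ A !![-1, 1; -1, 0] ∨ IsConjToZ A !![0, 1; -1, 1] := by
  have key : ∀ B : SL2Z, CR A B → IsConjToZ A B.val := by
    rintro B ⟨P, hP⟩
    exact ⟨P, by rw [hP]; simp [Matrix.SpecialLinearGroup.coe_mul]⟩
  rcases h with h'|h'|h'|h'|h'|h'
  · exact Or.inl (R14_val ▸ key _ h')
  · exact Or.inr (Or.inl (R34_val ▸ key _ h'))
  · exact Or.inr (Or.inr (Or.inl (R16_val ▸ key _ h')))
  · exact Or.inr (Or.inr (Or.inr (Or.inl (R13_val ▸ key _ h'))))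
  · exact Or.inr (Or.inr (Or.inr (Or.inr (Or.inl (R23_val ▸ key _ h')))))
  · exact Or.inr (Or.inr (Or.inr (Or.inr (Or.inr (R56_val ▸ key _ h')))))

end EllipticAux

open EllipticAux in
/-- An elliptic element of `SL(2,ℤ)` (i.e. `|Tr A| < 2`) is conjugate in `SL(2,ℤ)` to one of the
six matrices `R̃_{1/4}`, `R̃_{3/4}`, `R̃_{1/6}`, `R̃_{1/3}`, `R̃_{2/3}`, `R̃_{5/6}`. -/
theorem elliptic_SL2Z_classification (A : SL2Z)
    (hA : |Matrix.trace A.val| < 2) :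
    IsConjToZ A !![0, -1; 1, 0] ∨ IsConjToZ A !![0, 1; -1, 0] ∨
    IsConjToZ A !![1, -1; 1, 0] ∨ IsConjToZ A !![0, -1; 1, -1] ∨
    IsConjToZ A !![-1, 1; -1, 0] ∨ IsConjToZ A !![0, 1; -1, 1] := by
  apply goal_isConj
  rw [Matrix.trace_fin_two, abs_lt] at hA
  have htr : |A.val 0 0 + A.val 1 1| ≤ 1 := abs_le.mpr ⟨by omega, by omega⟩
  have hdet := det_entries A
  have hcne : A.val 1 0 ≠ 0 := by
    intro h0
    rw [h0, mul_zero, sub_zero] at hdet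
    rcases Int.mul_eq_one_iff_eq_one_or_neg_one.mp hdet with ⟨h1, h2⟩ | ⟨h1, h2⟩ <;> omega
  rcases lt_or_gt_of_ne hcne with hneg | hpos
  · -- use A⁻¹, whose lower-left entry is positive
    apply Goal.of_inv
    have h00 : (A⁻¹).val 0 0 = A.val 1 1 := by rw [inv_val]; simp
    have h10 : (A⁻¹).val 1 0 = -A.val 1 0 := by rw [inv_val]; simp
    have h11 : (A⁻¹).val 1 1 = A.val 0 0 := by rw [inv_val]; simp
    refine reduce (-A.val 1 0).toNat A⁻¹ ?_ ?_ ?_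
    · rw [h00, h11]; exact abs_le.mpr ⟨by omega, by omega⟩
    · rw [h10]; omega
    · omega
  · refine reduce (A.val 1 0).toNat A ?_ ?_ ?_
    · exact htr
    · omega
    · omega
end

section
/- Let A ∈ SL(2,ℤ) be parabolic, i.e. |Tr(A)| = 2. Then there exists n ∈ ℤ such that A is conjugate in SL(2,ℤ) either to I_n = [[1,n],[0,1]] or to I_n* = [[-1,-n],[0,-1]]. -/
open Matrix

namespace Matrix.SpecialLinearGroup

variable {R : Type*} [CommRing R]

lemma det_sub_one_eq_zero_of_trace_eq_two (A : SpecialLinearGroup (Fin 2) R)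
    (hA : trace (A : Matrix (Fin 2) (Fin 2) R) = 2) :
    det ((A : Matrix (Fin 2) (Fin 2) R) - 1) = 0 := by
  have hdet := A.det_coe
  rw [det_fin_two] at hdet ⊢
  rw [trace_fin_two] at hA
  simp only [sub_apply, one_apply_eq, one_apply_ne zero_ne_one, one_apply_ne one_ne_zero]
  linear_combination hdet - hA

lemma coe_eq_unipotent_of_col_zero (A : SpecialLinearGroup (Fin 2) R)
    (h₀₀ : A 0 0 = 1) (h₁₀ : A 1 0 = 0) :
    (A : Matrix (Fin 2) (Fin 2) R) = !![1, A 0 1; 0, 1] := by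
  have hdet := A.det_coe
  rw [det_fin_two, h₀₀, h₁₀] at hdet
  rw [eta_fin_two (A : Matrix (Fin 2) (Fin 2) R), h₀₀, h₁₀]
  congr
  linear_combination hdet

/-- With `u x + v z = 1`, the matrix `P = [[x, -v], [z, u]]` sends `e₀` to the fixed vector
`(x, z)`, so `P⁻¹ A P` fixes `e₀`. -/
lemma exists_conj_eq_unipotent_of_mulVec_eq {x z : R} (hxz : IsCoprime x z)
    (A : SpecialLinearGroup (Fin 2) R) (hA : A *ᵥ ![x, z] = ![x, z]) :
    ∃ (P : SpecialLinearGroup (Fin 2) R) (n : R),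
      (A : Matrix (Fin 2) (Fin 2) R) =
        P * !![1, n; 0, 1] * (P⁻¹ : SpecialLinearGroup (Fin 2) R) := by
  obtain ⟨u, v, huv⟩ := hxz
  obtain ⟨P, hP⟩ :
      ∃ P : SpecialLinearGroup (Fin 2) R, (P : Matrix (Fin 2) (Fin 2) R) = !![x, -v; z, u] :=
    ⟨⟨!![x, -v; z, u], by rw [det_fin_two_of]; linear_combination huv⟩, rfl⟩
  have hPe : (P : Matrix (Fin 2) (Fin 2) R) *ᵥ Pi.single 0 1 = ![x, z] := by
    rw [mulVec_single_one, hP]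
    ext i; fin_cases i <;> rfl
  have hBe : ((P⁻¹ * A * P : SpecialLinearGroup (Fin 2) R) : Matrix (Fin 2) (Fin 2) R) *ᵥ
      Pi.single 0 1 = Pi.single 0 1 := by
    rw [coe_mul, coe_mul, ← mulVec_mulVec, ← mulVec_mulVec, hPe, hA, ← hPe, mulVec_mulVec,
      ← coe_mul, inv_mul_cancel, coe_one, one_mulVec]
  rw [mulVec_single_one] at hBe
  have hB₀₀ : (P⁻¹ * A * P) 0 0 = 1 := by simpa using congr_fun hBe 0
  have hB₁₀ : (P⁻¹ * A * P) 1 0 = 0 := by simpa using congr_fun hBe 1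
  refine ⟨P, (P⁻¹ * A * P) 0 1, ?_⟩
  rw [← coe_eq_unipotent_of_col_zero _ hB₀₀ hB₁₀, ← coe_mul, ← coe_mul]
  exact congrArg _ (by group)

end Matrix.SpecialLinearGroup

lemma Int.exists_isCoprime_mulVec_eq_zero_of_det_eq_zero {M : Matrix (Fin 2) (Fin 2) ℤ}
    (hM : M.det = 0) :
    ∃ x z : ℤ, IsCoprime x z ∧ M *ᵥ ![x, z] = 0 := by
  obtain ⟨w, hw, hMw⟩ := Matrix.exists_mulVec_eq_zero_iff.mpr hM
  have hgcd : 0 < Int.gcd (w 0) (w 1) := by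
    refine Int.gcd_pos_iff.mpr (not_and_or.mp fun h => hw ?_)
    ext i; fin_cases i <;> simp [h.1, h.2]
  obtain ⟨g, x, z, hg, hxz, hx, hz⟩ := Int.exists_gcd_one' hgcd
  have hw_eq : w = (g : ℤ) • ![x, z] := by
    ext i; fin_cases i <;> simp [hx, hz, mul_comm]
  refine ⟨x, z, Int.isCoprime_iff_gcd_eq_one.mpr hxz, ?_⟩
  rw [hw_eq, mulVec_smul] at hMw
  exact (smul_eq_zero.mp hMw).resolve_left (by positivity)

lemma SL2Z.exists_isConjToZ_unipotent_of_trace_eq_two (A : SL2Z) (hA : trace A.val = 2) :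
    ∃ n : ℤ, IsConjToZ A !![1, n; 0, 1] := by
  obtain ⟨x, z, hxz, hker⟩ :=
    Int.exists_isCoprime_mulVec_eq_zero_of_det_eq_zero (A.det_sub_one_eq_zero_of_trace_eq_two hA)
  rw [sub_mulVec, one_mulVec, sub_eq_zero] at hker
  obtain ⟨P, n, hP⟩ := A.exists_conj_eq_unipotent_of_mulVec_eq hxz hker
  exact ⟨n, P, hP⟩

lemma IsConjToZ.of_neg {A : SL2Z} {B : Matrix (Fin 2) (Fin 2) ℤ} (h : IsConjToZ (-A) B) :
    IsConjToZ A (-B) := by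
  obtain ⟨P, hP⟩ := h
  refine ⟨P, ?_⟩
  rw [mul_neg, neg_mul, ← hP, Matrix.SpecialLinearGroup.coe_neg, neg_neg]

/-- A parabolic element of `SL(2,ℤ)` (i.e. `|Tr A| = 2`) is conjugate in `SL(2,ℤ)` to
`I_n = [[1,n],[0,1]]` or to `I_n* = [[-1,-n],[0,-1]]` for some `n ∈ ℤ`. -/
theorem parabolic_SL2Z_classification (A : SL2Z)
    (hA : |Matrix.trace A.val| = 2) :
    ∃ n : ℤ, IsConjToZ A !![1, n; 0, 1] ∨ IsConjToZ A !![-1, -n; 0, -1] := by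
  rcases abs_eq zero_le_two |>.mp hA with h | h
  · obtain ⟨n, hn⟩ := A.exists_isConjToZ_unipotent_of_trace_eq_two h
    exact ⟨n, .inl hn⟩
  · have h_neg : trace (-A).val = 2 := by
      rw [Matrix.SpecialLinearGroup.coe_neg, trace_neg, h, neg_neg]
    obtain ⟨n, hn⟩ := (-A).exists_isConjToZ_unipotent_of_trace_eq_two h_neg
    refine ⟨n, .inr ?_⟩
    convert hn.of_neg using 1
    ext i j; fin_cases i <;> fin_cases j <;> rfl
end

section
/- Fix real numbers j > 0 and h ≥ 0. For z ∈ ℝ set y(z) = √j·z, t_*(z) = y(z)/2 + √(h²/2 + y(z)²/4), s_*(z) = −y(z)/2 + √(h²/2 + y(z)²/4), and define F̂(z) = −jz²/2 − t_*(z)² + 2 t_*(z) y(z) + h·log t_*(z) and Û(z) = −jz²/2 − s_*(z)² − 2 s_*(z) y(z) + h·log s_*(z), with the convention that the term h·log s_*(z) equals 0 when h = 0. Then F̂ is strictly increasing on [1,∞) and Û is strictly decreasing on [1,∞). -/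
/-!
In the variable `y = √j z`, with `R = √(h²/2 + y²/4)`, one has `t_*' = t_*/(2R)` and
`s_*' = -s_*/(2R)`; since `t_* s_* = h²/2`, the derivatives of `F̂` and `Û` in `y` collapse to
`±(h² + h + y²)/(2R)`, of fixed sign for `h ≥ 0`, `y > 0`. The logarithm needs `s_* > 0`, i.e.
`h > 0`; for `h = 0` one has `s_* = 0` and `Û = -y²/2` on `y ≥ 0`.
-/

open Real Set

namespace CalabiExponent

noncomputable def radius (h y : ℝ) : ℝ := √(h ^ 2 / 2 + y ^ 2 / 4)

noncomputable def tStar (h y : ℝ) : ℝ := y / 2 + radius h y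

noncomputable def sStar (h y : ℝ) : ℝ := -y / 2 + radius h y

noncomputable def growthExp (h y : ℝ) : ℝ :=
  -y ^ 2 / 2 - tStar h y ^ 2 + 2 * tStar h y * y + h * log (tStar h y)

noncomputable def decayExp (h y : ℝ) : ℝ :=
  -y ^ 2 / 2 - sStar h y ^ 2 - 2 * sStar h y * y + h * log (sStar h y)

variable {h y : ℝ}

lemma radius_sq (h y : ℝ) : radius h y ^ 2 = h ^ 2 / 2 + y ^ 2 / 4 :=
  sq_sqrt (by positivity)

lemma radius_pos_of_ne_zero_left (hh : h ≠ 0) : 0 < radius h y :=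
  sqrt_pos.2 (by positivity)

lemma radius_pos_of_ne_zero_right (hy : y ≠ 0) : 0 < radius h y :=
  sqrt_pos.2 (by positivity)

lemma radius_zero_left (hy : 0 ≤ y) : radius 0 y = y / 2 := by
  rw [radius, show (0 : ℝ) ^ 2 / 2 + y ^ 2 / 4 = (y / 2) ^ 2 by ring, sqrt_sq (by linarith)]

lemma tStar_pos (hy : 0 < y) : 0 < tStar h y := by
  have := sqrt_nonneg (h ^ 2 / 2 + y ^ 2 / 4)
  unfold tStar radius
  linarith

lemma sStar_pos (hh : h ≠ 0) : 0 < sStar h y := by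
  have hR := radius_pos_of_ne_zero_left (y := y) hh
  have := radius_sq h y
  unfold sStar
  nlinarith [sq_pos_of_ne_zero hh]

lemma decayExp_zero_left (hy : 0 ≤ y) : decayExp 0 y = -y ^ 2 / 2 := by
  simp only [decayExp, sStar, radius_zero_left hy, zero_mul, add_zero]
  ring

lemma hasDerivAt_radius (hR : radius h y ≠ 0) :
    HasDerivAt (radius h) (y / (4 * radius h y)) y := by
  have hq : h ^ 2 / 2 + y ^ 2 / 4 ≠ 0 := (sqrt_ne_zero'.1 hR).ne'
  refine ((((hasDerivAt_pow 2 y).div_const 4).const_add (h ^ 2 / 2)).sqrt hq).congr_deriv ?_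
  rw [← radius]
  field_simp
  ring

lemma hasDerivAt_tStar (hR : radius h y ≠ 0) :
    HasDerivAt (tStar h) (tStar h y / (2 * radius h y)) y := by
  refine (((hasDerivAt_id y).div_const 2).add (hasDerivAt_radius hR)).congr_deriv ?_
  rw [tStar]
  field_simp
  ring

lemma hasDerivAt_sStar (hR : radius h y ≠ 0) :
    HasDerivAt (sStar h) (-sStar h y / (2 * radius h y)) y := by
  refine (((hasDerivAt_id y).neg.div_const 2).add (hasDerivAt_radius hR)).congr_deriv ?_
  rw [sStar]
  field_simp
  ring

lemma hasDerivAt_growthExp (hy : 0 < y) :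
    HasDerivAt (growthExp h) ((h ^ 2 + h + y ^ 2) / (2 * radius h y)) y := by
  have hR := radius_pos_of_ne_zero_right (h := h) hy.ne'
  have ht := hasDerivAt_tStar hR.ne'
  have htpos := tStar_pos (h := h) hy
  refine (((((hasDerivAt_pow 2 y).neg.div_const 2).sub (ht.pow 2)).add
    ((ht.const_mul 2).mul (hasDerivAt_id' y))).add ((ht.log htpos.ne').const_mul h)).congr_deriv ?_
  field_simp
  rw [tStar]
  linear_combination 2 * radius_sq h y

lemma hasDerivAt_decayExp (hh : h ≠ 0) :
    HasDerivAt (decayExp h) (-((h ^ 2 + h + y ^ 2) / (2 * radius h y))) y := by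
  have hR := radius_pos_of_ne_zero_left (y := y) hh
  have hs := hasDerivAt_sStar hR.ne'
  have hs0 := (sStar_pos (y := y) hh).ne'
  refine (((((hasDerivAt_pow 2 y).neg.div_const 2).sub (hs.pow 2)).sub
    ((hs.const_mul 2).mul (hasDerivAt_id' y))).add
      ((hs.log hs0).const_mul h)).congr_deriv ?_
  field_simp
  rw [sStar]
  linear_combination (-2) * radius_sq h y

lemma growthExp_strictMonoOn (hh : 0 ≤ h) : StrictMonoOn (growthExp h) (Ioi 0) := by
  refine strictMonoOn_of_hasDerivWithinAt_pos (convex_Ioi 0)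
    (fun y hy ↦ (hasDerivAt_growthExp hy).continuousAt.continuousWithinAt)
    (fun y hy ↦ (hasDerivAt_growthExp (interior_subset hy)).hasDerivWithinAt) fun y hy ↦ ?_
  rw [interior_Ioi, mem_Ioi] at hy
  have hR := radius_pos_of_ne_zero_right (h := h) hy.ne'
  positivity

lemma decayExp_strictAntiOn (hh : 0 ≤ h) : StrictAntiOn (decayExp h) (Ioi 0) := by
  rcases hh.eq_or_lt with rfl | hh
  · intro a ha b hb hab
    rw [decayExp_zero_left (le_of_lt ha), decayExp_zero_left (le_of_lt hb)]
    nlinarith [mem_Ioi.1 ha]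
  · refine (strictAnti_of_hasDerivAt_neg (fun _ ↦ hasDerivAt_decayExp hh.ne')
      fun y ↦ ?_).strictAntiOn _
    have hR := radius_pos_of_ne_zero_left (y := y) hh.ne'
    rw [neg_lt_zero]
    positivity

end CalabiExponent

open CalabiExponent

/-- Lemma B.2(1): the exponent `F̂` of the growing fundamental solution is strictly increasing
on `[1,∞)` and the exponent `Û` of the decaying fundamental solution is strictly decreasing on
`[1,∞)`.  (Since `Real.log 0 = 0` in Mathlib, the term `h · log s_*(z)` automatically equals
`0` in the degenerate case `h = 0`, where `s_*(z) = 0`.) -/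
theorem exponent_monotonicity (j h : ℝ) (hj : 0 < j) (hh : 0 ≤ h)
    (y tstar sstar Fhat Uhat : ℝ → ℝ)
    (hy : ∀ z, y z = Real.sqrt j * z)
    (ht : ∀ z, tstar z = y z / 2 + Real.sqrt (h ^ 2 / 2 + (y z) ^ 2 / 4))
    (hs : ∀ z, sstar z = -(y z) / 2 + Real.sqrt (h ^ 2 / 2 + (y z) ^ 2 / 4))
    (hF : ∀ z, Fhat z =
      -j * z ^ 2 / 2 - (tstar z) ^ 2 + 2 * tstar z * y z + h * Real.log (tstar z))
    (hU : ∀ z, Uhat z =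
      -j * z ^ 2 / 2 - (sstar z) ^ 2 - 2 * sstar z * y z + h * Real.log (sstar z)) :
    StrictMonoOn Fhat (Set.Ici (1 : ℝ)) ∧ StrictAntiOn Uhat (Set.Ici (1 : ℝ)) := by
  have hy2 (z : ℝ) : -j * z ^ 2 = -y z ^ 2 := by rw [hy, mul_pow, sq_sqrt hj.le, neg_mul]
  have hFhat : Fhat = growthExp h ∘ y := by
    ext z
    rw [hF, ht, hy2, Function.comp_apply, growthExp, tStar, radius]
  have hUhat : Uhat = decayExp h ∘ y := by
    ext z
    rw [hU, hs, hy2, Function.comp_apply, decayExp, sStar, radius]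
  have hy_mono : StrictMonoOn y (Ici 1) := by
    simpa [funext hy] using (strictMono_mul_left_of_pos (sqrt_pos.2 hj)).strictMonoOn (Ici 1)
  have hy_maps : MapsTo y (Ici 1) (Ioi 0) := fun z hz ↦ by
    rw [hy]
    exact mul_pos (sqrt_pos.2 hj) (zero_lt_one.trans_le hz)
  exact ⟨hFhat ▸ (growthExp_strictMonoOn hh).comp hy_mono hy_maps,
    hUhat ▸ (decayExp_strictAntiOn hh).comp_strictMonoOn hy_mono hy_maps⟩
end

section
/- There exists a constant C₀ > 0 such that for every integer j ≥ 1, every real h ≥ 0 and every real z ≥ 1 the following holds. Define 𝓕(z) = e^{−jz²/2} ∫₀^∞ e^{−t² + 2t√j z} t^h dt, 𝓤(z) = e^{−jz²/2} ∫₀^∞ e^{−t² − 2t√j z} t^h dt, and the Wronskian W(z) = 𝓕′(z)𝓤(z) − 𝓕(z)𝓤′(z). With y = √j z, t_* = y/2 + √(h²/2 + y²/4), s_* = −y/2 + √(h²/2 + y²/4), F̂(z) = −jz²/2 − t_*² + 2t_* y + h·log t_*, and Û(z) = −jz²/2 − s_*² − 2s_* y + h·log s_* (with the convention h·log s_* =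 0 when h = 0), one has W(z) > 0 and e^{F̂(z) + Û(z)} ≤ C₀ · W(z). -/
/-!
Write `K_h(c) = ∫₀^∞ e^{-t² + 2tc} t^h dt` and `E = e^{-jz²/2}`, so that `𝓕 = E · K_h(y)` and
`𝓤 = E · K_h(-y)`. Since `K_h' = 2 K_{h+1}`, the derivatives of `E` cancel in the Wronskian and
`W = √j E² (2 K_{h+1}(y) K_h(-y) + 2 K_h(y) K_{h+1}(-y))`, a sum of nonnegative terms.

On `t > 0` the integrand of `K_h(c)` is `e^{φ_c(t)}` with `φ_c(t) = -t² + 2tc + h log t`. Because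
`t_* - s_* = y` and `t_* s_* = h²/2`, the phase `φ_y` drops by at most `1` on `(t_* - 1/2, t_*]`
(the loss `h log (t_*/t) ≤ h (t_* - t)/t ≤ (2 s_* + 1)(t_* - t)` is offset by the gain
`2 s_* (t_* - t)` of the quadratic part), and `φ_{-y}` drops by at most `3` on
`(s_*, s_* + 1/t_*]`. Integrating over these intervals gives `K_{h+1}(y) ≥ t_* e^{φ_y(t_*) - 1} / 4`
and `K_h(-y) ≥ e^{φ_{-y}(s_*) - 3} / t_*`; the factors `t_*` cancel and `W ≥ e^{F̂ + Û - 4} / 2`,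
so `C₀ = 2e⁴` works.
-/

open MeasureTheory Real Set Metric

noncomputable def gaussianMoment (h c : ℝ) : ℝ :=
  ∫ t in Ioi 0, exp (-t ^ 2 + 2 * t * c) * t ^ h

noncomputable def phase (h c t : ℝ) : ℝ := -t ^ 2 + 2 * t * c + h * log t

noncomputable def tStar (h y : ℝ) : ℝ := y / 2 + √(h ^ 2 / 2 + y ^ 2 / 4)

noncomputable def sStar (h y : ℝ) : ℝ := -y / 2 + √(h ^ 2 / 2 + y ^ 2 / 4)

lemma wronskian_mul_comp {E K : ℝ → ℝ} {a z d₁ d₂ : ℝ} (hE : DifferentiableAt ℝ E z)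
    (hK₁ : HasDerivAt K d₁ (a * z)) (hK₂ : HasDerivAt K d₂ (-(a * z))) :
    deriv (fun w => E w * K (a * w)) z * (E z * K (-(a * z)))
        - E z * K (a * z) * deriv (fun w => E w * K (-(a * w))) z
      = a * E z ^ 2 * (d₁ * K (-(a * z)) + K (a * z) * d₂) := by
  have ha : HasDerivAt (fun w => a * w) a z := by simpa using (hasDerivAt_id z).const_mul a
  have hF : HasDerivAt (fun w => E w * K (a * w)) (deriv E z * K (a * z) + E z * (d₁ * a)) z :=
    hE.hasDerivAt.mul (hK₁.comp z ha)
  have hU : HasDerivAt (fun w => E w * K (-(a * w)))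
      (deriv E z * K (-(a * z)) + E z * (d₂ * -a)) z :=
    hE.hasDerivAt.mul (hK₂.comp z ha.neg)
  rw [hF.deriv, hU.deriv]
  ring

lemma mul_sub_le_setIntegral_of_le_on_Ioc {f : ℝ → ℝ} {s : Set ℝ} (hs : MeasurableSet s)
    (hf : IntegrableOn f s) (hf₀ : ∀ t ∈ s, 0 ≤ f t) {a b m : ℝ} (hab : a ≤ b)
    (hsub : Ioc a b ⊆ s) (hm : ∀ t ∈ Ioc a b, m ≤ f t) :
    m * (b - a) ≤ ∫ t in s, f t :=
  calc m * (b - a) = m * volume.real (Ioc a b) := by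
        rw [measureReal_def, volume_Ioc, ENNReal.toReal_ofReal (by linarith)]
    _ ≤ ∫ t in Ioc a b, f t :=
        setIntegral_ge_of_const_le_real measurableSet_Ioc (by simp) hm (hf.mono_set hsub)
    _ ≤ ∫ t in s, f t :=
        setIntegral_mono_set hf ((ae_restrict_iff' hs).2 (.of_forall hf₀)) hsub.eventuallyLE

section GaussianMoment

variable {h : ℝ}

lemma exp_mul_rpow_eq_exp_phase {c t : ℝ} (ht : 0 < t) :
    exp (-t ^ 2 + 2 * t * c) * t ^ h = exp (phase h c t) := by
  rw [phase, rpow_def_of_pos ht, mul_comm (log t), ← exp_add]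

lemma gaussianMoment_neg (c : ℝ) :
    gaussianMoment h (-c) = ∫ t in Ioi 0, exp (-t ^ 2 - 2 * t * c) * t ^ h := by
  simp only [gaussianMoment, mul_neg, ← sub_eq_add_neg]

lemma gaussianMoment_nonneg (c : ℝ) : 0 ≤ gaussianMoment h c :=
  setIntegral_nonneg measurableSet_Ioi fun _ ht => mul_nonneg (exp_pos _).le (rpow_nonneg ht.le h)

lemma integrableOn_gaussianMoment (hh : -1 < h) (c : ℝ) :
    IntegrableOn (fun t => exp (-t ^ 2 + 2 * t * c) * t ^ h) (Ioi 0) := by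
  refine ((integrableOn_rpow_mul_exp_neg_mul_sq (b := 1 / 2) (by norm_num) hh).const_mul
    (exp (2 * c ^ 2))).mono' (by fun_prop) ?_
  refine (ae_restrict_iff' measurableSet_Ioi).2 (.of_forall fun t ht => ?_)
  have hth : 0 ≤ t ^ h := rpow_nonneg (le_of_lt ht) h
  rw [norm_of_nonneg (by positivity), mul_comm (t ^ h), ← mul_assoc, ← exp_add]
  refine mul_le_mul_of_nonneg_right (exp_le_exp.2 ?_) hth
  nlinarith [sq_nonneg (t - 2 * c)]

lemma hasDerivAt_gaussianMoment (hh : -1 < h) (c : ℝ) :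
    HasDerivAt (gaussianMoment h) (2 * gaussianMoment (h + 1) c) c := by
  have hint := integrableOn_gaussianMoment (h := h + 1) (by linarith) (c + 1)
  have key := hasDerivAt_integral_of_dominated_loc_of_deriv_le (μ := volume.restrict (Ioi 0))
    (F := fun c t => exp (-t ^ 2 + 2 * t * c) * t ^ h)
    (F' := fun c t => 2 * (exp (-t ^ 2 + 2 * t * c) * t ^ (h + 1)))
    (bound := fun t => 2 * (exp (-t ^ 2 + 2 * t * (c + 1)) * t ^ (h + 1)))
    (ball_mem_nhds c one_pos) (.of_forall fun _ => by fun_prop)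
    (integrableOn_gaussianMoment hh c) (by fun_prop) ?_ (hint.const_mul 2) ?_
  · rw [gaussianMoment, ← integral_const_mul]
    exact key.2
  · refine (ae_restrict_iff' measurableSet_Ioi).2 (.of_forall fun t ht c' hc' => ?_)
    have hc' : c' ≤ c + 1 := by linarith [(abs_lt.1 (mem_ball_iff_norm.1 hc')).2]
    have ht : 0 < t := ht
    rw [norm_of_nonneg (by positivity)]
    gcongr
  · refine (ae_restrict_iff' measurableSet_Ioi).2 (.of_forall fun t ht c' _ => ?_)
    have ht : 0 < t := ht
    have := (((hasDerivAt_id c').const_mul (2 * t)).const_add (-t ^ 2)).exp.mul_const (t ^ h)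
    refine this.congr_deriv ?_
    rw [rpow_add_one ht.ne', id]
    ring

end GaussianMoment

section CriticalPoints

variable {h y : ℝ}

lemma tStar_eq_sStar_add : tStar h y = sStar h y + y := by
  rw [tStar, sStar]; ring

lemma tStar_mul_sStar : tStar h y * sStar h y = h ^ 2 / 2 := by
  have := sq_sqrt (by positivity : 0 ≤ h ^ 2 / 2 + y ^ 2 / 4)
  rw [tStar, sStar]; nlinarith

lemma sStar_nonneg : 0 ≤ sStar h y := by
  rw [sStar]
  linarith [le_sqrt_of_sq_le (by nlinarith [sq_nonneg h] : (y / 2) ^ 2 ≤ h ^ 2 / 2 + y ^ 2 / 4)]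

lemma sStar_pos (hh : h ≠ 0) : 0 < sStar h y := by
  rw [sStar]
  linarith [lt_sqrt_of_sq_lt (by nlinarith [pow_pos (abs_pos.2 hh) 2, sq_abs h] :
    (y / 2) ^ 2 < h ^ 2 / 2 + y ^ 2 / 4)]

lemma le_tStar : y ≤ tStar h y := by
  linarith [tStar_eq_sStar_add (h := h) (y := y), sStar_nonneg (h := h) (y := y)]

lemma phase_sStar_sub_three_le (hh : 0 ≤ h) (hy : 1 ≤ y) {s : ℝ}
    (hs : s ∈ Ioc (sStar h y) (sStar h y + 1 / tStar h y)) :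
    phase h (-y) (sStar h y) - 3 ≤ phase h (-y) s := by
  set T := tStar h y
  set S := sStar h y
  have hT : 1 ≤ T := hy.trans le_tStar
  have hlog : h * log S ≤ h * log s := by
    rcases eq_or_ne h 0 with rfl | hh'
    · simp
    · exact mul_le_mul_of_nonneg_left (log_le_log (sStar_pos hh') hs.1.le) hh
  have hquad : (s - S) * (s - S + 2 * T) ≤ 1 / T * (1 / T + 2 * T) :=
    mul_le_mul (by linarith [hs.2]) (by linarith [hs.2]) (by linarith [hs.1]) (by positivity)
  have hbound : 1 / T * (1 / T + 2 * T) ≤ 3 := by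
    have hu : 1 / T * T = 1 := one_div_mul_cancel (by positivity)
    have hu1 : 1 / T ≤ 1 := (div_le_one (by positivity)).2 hT
    nlinarith
  have hsq : -s ^ 2 + 2 * s * -y - (-S ^ 2 + 2 * S * -y) = -((s - S) * (s - S + 2 * T)) := by
    rw [show T = S + y from tStar_eq_sStar_add]; ring
  simp only [phase]
  linarith

lemma phase_tStar_sub_one_le (hh : 0 ≤ h) (hy : 1 ≤ y) {t : ℝ}
    (ht : t ∈ Ioc (tStar h y - 1 / 2) (tStar h y)) :
    phase h y (tStar h y) - 1 ≤ phase h y t := by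
  set T := tStar h y
  set S := sStar h y
  have hT : 1 ≤ T := hy.trans le_tStar
  have ht0 : 0 < t := by linarith [ht.1]
  have hd : 0 ≤ T - t := by linarith [ht.2]
  have hht : h ≤ (2 * S + 1) * t :=
    calc h ≤ (h ^ 2 + 1) / 2 := by nlinarith [sq_nonneg (h - 1)]
      _ ≤ T * S + T / 2 := by rw [tStar_mul_sStar]; linarith
      _ = (2 * S + 1) * (T / 2) := by ring
      _ ≤ (2 * S + 1) * t :=
        mul_le_mul_of_nonneg_left (by linarith [ht.1]) (by linarith [sStar_nonneg (h := h) (y := y)])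
  have hlog : h * (log T - log t) ≤ (2 * S + 1) * (T - t) := by
    have h1 : log T - log t ≤ T / t - 1 := by
      rw [← log_div (by positivity) ht0.ne']
      exact log_le_sub_one_of_pos (by positivity)
    have h2 : h * (T / t - 1) ≤ (2 * S + 1) * (T - t) := by
      rw [show h * (T / t - 1) = h * (T - t) / t by field_simp, div_le_iff₀ ht0]
      linarith [mul_le_mul_of_nonneg_left hht hd]
    linarith [mul_le_mul_of_nonneg_left h1 hh]
  have hsq : -t ^ 2 + 2 * t * y - (-T ^ 2 + 2 * T * y) = (T - t) * (2 * S - (T - t)) := by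
    rw [show T = S + y from tStar_eq_sStar_add]; ring
  have hd' : (T - t) ^ 2 ≤ 1 / 4 := by nlinarith [ht.1]
  simp only [phase]
  linarith [ht.1]

lemma exp_phase_sStar_div_le_gaussianMoment (hh : 0 ≤ h) (hy : 1 ≤ y) :
    exp (phase h (-y) (sStar h y) - 3) / tStar h y ≤ gaussianMoment h (-y) := by
  have hT : 0 < tStar h y := by linarith [le_tStar (h := h) (y := y)]
  have key := mul_sub_le_setIntegral_of_le_on_Ioc measurableSet_Ioi
    (integrableOn_gaussianMoment (by linarith) (-y))
    (fun t ht => mul_nonneg (exp_pos _).le (rpow_nonneg (le_of_lt ht) h))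
    (a := sStar h y) (b := sStar h y + 1 / tStar h y) (le_add_of_nonneg_right (by positivity))
    (fun t ht => sStar_nonneg.trans_lt ht.1)
    (fun s hs => by
      rw [exp_mul_rpow_eq_exp_phase (sStar_nonneg.trans_lt hs.1)]
      exact exp_le_exp.2 (phase_sStar_sub_three_le hh hy hs))
  rw [gaussianMoment, div_eq_mul_one_div]
  simpa using key

lemma tStar_mul_exp_phase_tStar_le_gaussianMoment (hh : 0 ≤ h) (hy : 1 ≤ y) :
    tStar h y * exp (phase h y (tStar h y) - 1) / 4 ≤ gaussianMoment (h + 1) y := by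
  have hT : 1 ≤ tStar h y := hy.trans le_tStar
  have key := mul_sub_le_setIntegral_of_le_on_Ioc measurableSet_Ioi
    (integrableOn_gaussianMoment (by linarith) y)
    (fun t ht => mul_nonneg (exp_pos _).le (rpow_nonneg (le_of_lt ht) (h + 1)))
    (a := tStar h y - 1 / 2) (b := tStar h y) (by linarith)
    (fun t ht => show 0 < t by linarith [ht.1])
    (m := tStar h y / 2 * exp (phase h y (tStar h y) - 1))
    (fun t ht => by
      have ht0 : 0 < t := by linarith [ht.1]
      rw [rpow_add_one ht0.ne', ← mul_assoc, exp_mul_rpow_eq_exp_phase ht0, mul_comm _ t]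
      exact mul_le_mul (by linarith [ht.1]) (exp_le_exp.2 (phase_tStar_sub_one_le hh hy ht))
        (exp_pos _).le ht0.le)
  rw [gaussianMoment]
  linarith

lemma exp_phase_add_phase_sub_four_le (hh : 0 ≤ h) (hy : 1 ≤ y) :
    exp (phase h y (tStar h y) + phase h (-y) (sStar h y) - 4)
      ≤ 4 * gaussianMoment (h + 1) y * gaussianMoment h (-y) := by
  have hT : 0 < tStar h y := by linarith [le_tStar (h := h) (y := y)]
  calc exp (phase h y (tStar h y) + phase h (-y) (sStar h y) - 4)
      = 4 * (tStar h y * exp (phase h y (tStar h y) - 1) / 4)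
          * (exp (phase h (-y) (sStar h y) - 3) / tStar h y) := by
        rw [show phase h y (tStar h y) + phase h (-y) (sStar h y) - 4
          = (phase h y (tStar h y) - 1) + (phase h (-y) (sStar h y) - 3) by ring, exp_add]
        field_simp
    _ ≤ 4 * gaussianMoment (h + 1) y * gaussianMoment h (-y) :=
        mul_le_mul (by linarith [tStar_mul_exp_phase_tStar_le_gaussianMoment hh hy])
          (exp_phase_sStar_div_le_gaussianMoment hh hy) (div_pos (exp_pos _) hT).le
          (by linarith [gaussianMoment_nonneg (h := h + 1) y])

end CriticalPoints

/-- Lemma B.2(2): a uniform two-sided control of the Wronskian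
`W = 𝓕′𝓤 − 𝓕𝓤′` of the two fundamental solutions `𝓕, 𝓤` of the model ODE on the Calabi
model space: `W(z) > 0` and `e^{F̂(z)+Û(z)} ≤ C₀ · W(z)`, with `C₀` independent of
`j ≥ 1`, `h ≥ 0` and `z ≥ 1`. -/
theorem wronskian_uniform_bound :
    ∃ C₀ : ℝ, 0 < C₀ ∧
      ∀ (j : ℕ), 1 ≤ j → ∀ (h : ℝ), 0 ≤ h →
      ∀ F U : ℝ → ℝ,
      (∀ z, F z = Real.exp (-(j : ℝ) * z ^ 2 / 2) *
          ∫ t in Set.Ioi (0 : ℝ),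
            Real.exp (-t ^ 2 + 2 * t * (Real.sqrt (j : ℝ) * z)) * t ^ h) →
      (∀ z, U z = Real.exp (-(j : ℝ) * z ^ 2 / 2) *
          ∫ t in Set.Ioi (0 : ℝ),
            Real.exp (-t ^ 2 - 2 * t * (Real.sqrt (j : ℝ) * z)) * t ^ h) →
      ∀ z : ℝ, 1 ≤ z →
      ∀ y tstar sstar : ℝ,
        y = Real.sqrt (j : ℝ) * z →
        tstar = y / 2 + Real.sqrt (h ^ 2 / 2 + y ^ 2 / 4) →
        sstar = -y / 2 + Real.sqrt (h ^ 2 / 2 + y ^ 2 / 4) →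
        0 < deriv F z * U z - F z * deriv U z ∧
        Real.exp ((-(j : ℝ) * z ^ 2 / 2 - tstar ^ 2 + 2 * tstar * y + h * Real.log tstar) +
            (-(j : ℝ) * z ^ 2 / 2 - sstar ^ 2 - 2 * sstar * y + h * Real.log sstar))
          ≤ C₀ * (deriv F z * U z - F z * deriv U z) := by
  refine ⟨2 * exp 4, by positivity, ?_⟩
  intro j hj h hh F U hF hU z hz y tstar sstar hy htst hsst
  obtain rfl : tstar = tStar h y := htst
  obtain rfl : sstar = sStar h y := hsst
  have hj : 1 ≤ √(j : ℝ) := one_le_sqrt.2 (by exact_mod_cast hj)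
  have hy1 : 1 ≤ y := hy ▸ one_le_mul_of_one_le_of_one_le hj hz
  set E := exp (-(j : ℝ) * z ^ 2 / 2)
  have hW : deriv F z * U z - F z * deriv U z = √(j : ℝ) * E ^ 2 *
      (2 * gaussianMoment (h + 1) y * gaussianMoment h (-y)
        + gaussianMoment h y * (2 * gaussianMoment (h + 1) (-y))) := by
    have hU' : U = fun w => exp (-(j : ℝ) * w ^ 2 / 2) * gaussianMoment h (-(√(j : ℝ) * w)) :=
      funext fun w => by rw [hU, gaussianMoment_neg]
    rw [funext hF, hU', hy]
    exact wronskian_mul_comp (by fun_prop) (hasDerivAt_gaussianMoment (by linarith) _)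
      (hasDerivAt_gaussianMoment (by linarith) _)
  set W := deriv F z * U z - F z * deriv U z
  set A := 2 * gaussianMoment (h + 1) y * gaussianMoment h (-y)
  have hAW : E ^ 2 * A ≤ W := by
    have hA : 0 ≤ A := mul_nonneg (mul_nonneg zero_le_two (gaussianMoment_nonneg y))
      (gaussianMoment_nonneg (-y))
    have hrest : 0 ≤ gaussianMoment h y * (2 * gaussianMoment (h + 1) (-y)) :=
      mul_nonneg (gaussianMoment_nonneg y) (mul_nonneg zero_le_two (gaussianMoment_nonneg (-y)))
    calc E ^ 2 * A = 1 * E ^ 2 * (A + 0) := by ring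
      _ ≤ W := by rw [hW]; gcongr
  refine (fun hbound => ⟨pos_of_mul_pos_right ((exp_pos _).trans_le hbound) (by positivity),
    hbound⟩) ?_
  calc _ = exp 4 * (E ^ 2 * exp (phase h y (tStar h y) + phase h (-y) (sStar h y) - 4)) := by
        simp only [E, phase, sq, ← exp_add]
        ring_nf
    _ ≤ exp 4 * (E ^ 2 * (2 * A)) := by
        gcongr
        linarith [exp_phase_add_phase_sub_four_le hh hy1]
    _ = 2 * exp 4 * (E ^ 2 * A) := by ring
    _ ≤ 2 * exp 4 * W := by gcongr
end

section
/- For every λ₀ > 0 and every τ < 0 there exists a constant C > 0 (depending only on λ₀ and τ) with the following property. For all λ ≥ λ₀, all w ≥ 2, all B ≥ 0, and every continuous function v : [w,∞) → ℝ with |v(t)| ≤ B·t^τ for all t ≥ w, the function u(z) = (2√λ)⁻¹ ( e^{−√λ z} ∫_w^z e^{√λ t}·t·v(t) dt + e^{√λ z} ∫_z^∞ e^{−√λ t}·t·v(t) dt ) satisfies |u(z)| ≤ C·B·z^{2+τ} for all z ≥ w. -/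
/-! Both pieces of `u` integrate `t v(t)` against the kernel `e^{-√λ |z - t|}`. For `t, z ≥ 2`
the weight ratio `(t / z)^{1+τ}` is at most polynomial in `|t - z|`, hence at most
`K e^{√λ₀ |t - z| / 2}`; half of the decay of the kernel absorbs this, and integrating the other
half gives `|u(z)| ≤ 2 K B z^{1+τ} / λ ≤ (2 K / λ₀) B z^{2+τ}`. -/

open MeasureTheory intervalIntegral Real

theorem rpow_le_mul_exp {x q ε : ℝ} (hx : 0 ≤ x) (hq : 0 ≤ q) (hε : 0 < ε) :
    x ^ q ≤ ((q + 1) / ε) ^ q * exp (ε * x) := by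
  set a := ε / (q + 1) with ha_def
  have ha : 0 < a := by positivity
  have hx_le : x ≤ a⁻¹ * exp (a * x) := by
    rw [inv_mul_eq_div, le_div_iff₀' ha]
    linarith [add_one_le_exp (a * x)]
  have hqa : a * q ≤ ε := by
    rw [ha_def, div_mul_eq_mul_div, div_le_iff₀ (by positivity)]
    nlinarith
  calc x ^ q ≤ (a⁻¹ * exp (a * x)) ^ q := rpow_le_rpow hx hx_le hq
    _ = a⁻¹ ^ q * exp (a * q * x) := by
      rw [mul_rpow (by positivity) (exp_pos _).le, ← exp_mul, mul_right_comm]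
    _ ≤ ((q + 1) / ε) ^ q * exp (ε * x) := by
      rw [ha_def, inv_div]
      gcongr

theorem div_le_one_add_abs_sub_div_two {t z : ℝ} (hz : 2 ≤ z) : t / z ≤ 1 + |t - z| / 2 := by
  rw [div_le_iff₀ (by linarith)]
  cases abs_cases (t - z) <;> nlinarith

theorem div_rpow_le_one_add_abs_sub_rpow_abs {t z : ℝ} (ht : 2 ≤ t) (hz : 2 ≤ z) (r : ℝ) :
    (t / z) ^ r ≤ (1 + |t - z| / 2) ^ |r| := by
  rcases le_or_gt 0 r with hr | hr
  · rw [abs_of_nonneg hr]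
    exact rpow_le_rpow (by positivity) (div_le_one_add_abs_sub_div_two hz) hr
  · rw [abs_of_neg hr, ← inv_div, inv_rpow (by positivity), ← rpow_neg (by positivity),
      abs_sub_comm]
    exact rpow_le_rpow (by positivity) (div_le_one_add_abs_sub_div_two ht) (by linarith)

theorem exists_rpow_le_mul_rpow_mul_exp (r : ℝ) {ε : ℝ} (hε : 0 < ε) :
    ∃ K, 0 < K ∧ ∀ t z, 2 ≤ t → 2 ≤ z → t ^ r ≤ K * z ^ r * exp (ε * |t - z|) := by
  refine ⟨((|r| + 1) / (2 * ε)) ^ |r| * exp (2 * ε), by positivity, fun t z ht hz => ?_⟩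
  have hz0 : 0 < z := by linarith
  calc t ^ r = z ^ r * (t / z) ^ r := by
        rw [div_rpow (by linarith) hz0.le, mul_div_cancel₀ _ (rpow_pos_of_pos hz0 r).ne']
    _ ≤ z ^ r * (((|r| + 1) / (2 * ε)) ^ |r| * exp (2 * ε * (1 + |t - z| / 2))) := by
        gcongr
        exact (div_rpow_le_one_add_abs_sub_rpow_abs ht hz r).trans
          (rpow_le_mul_exp (by positivity) (abs_nonneg r) (by positivity))
    _ = ((|r| + 1) / (2 * ε)) ^ |r| * exp (2 * ε) * z ^ r * exp (ε * |t - z|) := by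
        rw [show 2 * ε * (1 + |t - z| / 2) = 2 * ε + ε * |t - z| by ring, exp_add]
        ring

theorem abs_mul_le_mul_rpow_one_add {t y B τ : ℝ} (ht : 0 < t) (hy : |y| ≤ B * t ^ τ) :
    |t * y| ≤ B * t ^ (1 + τ) := by
  calc |t * y| ≤ t * (B * t ^ τ) := by rw [abs_mul, abs_of_pos ht]; gcongr
    _ = B * t ^ (1 + τ) := by rw [rpow_add ht, rpow_one]; ring

theorem norm_intervalIntegral_le_of_norm_le_mul_exp {f : ℝ → ℝ} {a b c M : ℝ} (hab : a ≤ b)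
    (hc : 0 < c) (hM : 0 ≤ M) (hf : ∀ t ∈ Set.Ioc a b, ‖f t‖ ≤ M * exp (-c * (b - t))) :
    ‖∫ t in a..b, f t‖ ≤ M / c := by
  have hF : ∀ t, HasDerivAt (fun t => M / c * exp (-c * (b - t))) (M * exp (-c * (b - t))) t := by
    intro t
    refine ((((hasDerivAt_id' t).const_sub b).const_mul (-c)).exp.const_mul (M / c)).congr_deriv ?_
    field_simp
  calc ‖∫ t in a..b, f t‖ ≤ ∫ t in a..b, M * exp (-c * (b - t)) :=
        norm_integral_le_of_norm_le hab (ae_of_all _ hf)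
          (Continuous.intervalIntegrable (by fun_prop) _ _)
    _ = M / c - M / c * exp (-c * (b - a)) := by
        rw [integral_eq_sub_of_hasDerivAt (fun t _ => hF t)
          (Continuous.intervalIntegrable (by fun_prop) _ _)]
        simp
    _ ≤ M / c := by
        have : 0 ≤ M / c * exp (-c * (b - a)) := by positivity
        linarith

theorem norm_integral_Ioi_le_of_norm_le_mul_exp {f : ℝ → ℝ} {a c M : ℝ} (hc : 0 < c)
    (hf : ∀ t ∈ Set.Ioi a, ‖f t‖ ≤ M * exp (-c * (t - a))) :
    ‖∫ t in Set.Ioi a, f t‖ ≤ M / c := by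
  have hg : ∀ t, M * exp (-c * (t - a)) = M * exp (c * a) * exp (-c * t) := by
    intro t; rw [mul_assoc, ← exp_add]; ring_nf
  simp_rw [hg] at hf ⊢
  calc ‖∫ t in Set.Ioi a, f t‖ ≤ ∫ t in Set.Ioi a, M * exp (c * a) * exp (-c * t) :=
        norm_integral_le_of_norm_le ((integrableOn_exp_mul_Ioi (by linarith) a).const_mul _)
          ((ae_restrict_iff' measurableSet_Ioi).2 (ae_of_all _ hf))
    _ = M / c := by
        rw [MeasureTheory.integral_const_mul, integral_exp_mul_Ioi (by linarith), neg_mul,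
          neg_div_neg_eq, mul_assoc, mul_div_assoc', ← exp_add, add_neg_cancel, exp_zero,
          mul_one_div]

theorem abs_exp_neg_mul_mul_le {s d y M : ℝ} (hy : |y| ≤ M * exp (s / 2 * d)) :
    |exp (-s * d) * y| ≤ M * exp (-(s / 2) * d) := by
  rw [abs_mul, abs_of_pos (exp_pos _)]
  calc exp (-s * d) * |y| ≤ exp (-s * d) * (M * exp (s / 2 * d)) := by gcongr
    _ = M * exp (-(s / 2) * d) := by
      rw [mul_left_comm, ← exp_add]
      ring_nf

theorem abs_exp_neg_mul_mul_intervalIntegral_le {g : ℝ → ℝ} {s w z M : ℝ} (hwz : w ≤ z)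
    (hs : 0 < s) (hM : 0 ≤ M) (hg : ∀ t ∈ Set.Ioc w z, |g t| ≤ M * exp (s / 2 * |t - z|)) :
    |exp (-s * z) * ∫ t in w..z, exp (s * t) * g t| ≤ M / (s / 2) := by
  rw [← intervalIntegral.integral_const_mul]
  refine norm_intervalIntegral_le_of_norm_le_mul_exp hwz (by positivity) hM fun t ht => ?_
  rw [norm_eq_abs, ← mul_assoc, ← exp_add, show -s * z + s * t = -s * (z - t) by ring]
  have hgt := hg t ht
  rw [abs_sub_comm, abs_of_nonneg (sub_nonneg.2 ht.2)] at hgt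
  exact abs_exp_neg_mul_mul_le hgt

theorem abs_exp_mul_mul_integral_Ioi_le {g : ℝ → ℝ} {s z M : ℝ} (hs : 0 < s)
    (hg : ∀ t ∈ Set.Ioi z, |g t| ≤ M * exp (s / 2 * |t - z|)) :
    |exp (s * z) * ∫ t in Set.Ioi z, exp (-s * t) * g t| ≤ M / (s / 2) := by
  rw [← MeasureTheory.integral_const_mul]
  refine norm_integral_Ioi_le_of_norm_le_mul_exp (by positivity) fun t ht => ?_
  rw [norm_eq_abs, ← mul_assoc, ← exp_add, show s * z + -s * t = -s * (t - z) by ring]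
  have hgt := hg t ht
  rw [abs_of_nonneg (sub_nonneg.2 (le_of_lt ht))] at hgt
  exact abs_exp_neg_mul_mul_le hgt

theorem variation_of_parameters_exponential_bound_general (lam₀ τ : ℝ) (hlam₀ : 0 < lam₀) :
    ∃ C : ℝ, 0 < C ∧
      ∀ lam w B : ℝ, lam₀ ≤ lam → 2 ≤ w → 0 ≤ B →
      ∀ v : ℝ → ℝ, ContinuousOn v (Set.Ici w) →
      (∀ t, w ≤ t → |v t| ≤ B * t ^ τ) →
      ∀ z, w ≤ z →
        |(2 * Real.sqrt lam)⁻¹ *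
            (Real.exp (-Real.sqrt lam * z) *
              (∫ t in w..z, Real.exp (Real.sqrt lam * t) * t * v t) +
             Real.exp (Real.sqrt lam * z) *
              (∫ t in Set.Ioi z, Real.exp (-Real.sqrt lam * t) * t * v t))|
          ≤ C * B * z ^ (2 + τ) := by
  obtain ⟨K, hK, hKbound⟩ :=
    exists_rpow_le_mul_rpow_mul_exp (1 + τ) (half_pos (sqrt_pos.2 hlam₀))
  refine ⟨2 * K / lam₀, by positivity, fun lam w B hlam hw hB v _ hvb z hz => ?_⟩
  set s := √lam with hs_def
  have hss : √lam₀ ≤ s := sqrt_le_sqrt hlam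
  have hs : 0 < s := (sqrt_pos.2 hlam₀).trans_le hss
  have hz0 : 0 < z := by linarith
  set M := B * K * z ^ (1 + τ) with hM_def
  have hM : 0 ≤ M := by positivity
  have hweight : ∀ t, w ≤ t → |t * v t| ≤ M * exp (s / 2 * |t - z|) := fun t ht => calc
    |t * v t| ≤ B * t ^ (1 + τ) := abs_mul_le_mul_rpow_one_add (by linarith) (hvb t ht)
    _ ≤ B * (K * z ^ (1 + τ) * exp (√lam₀ / 2 * |t - z|)) := by
        gcongr; exact hKbound t z (by linarith) (by linarith)
    _ ≤ M * exp (s / 2 * |t - z|) := by rw [← mul_assoc, ← mul_assoc]; gcongr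
  simp_rw [mul_assoc (exp _) _ (v _)]
  have hI₁ := abs_exp_neg_mul_mul_intervalIntegral_le hz hs hM fun t ht => hweight t ht.1.le
  have hI₂ := abs_exp_mul_mul_integral_Ioi_le hs fun t ht => hweight t (hz.trans ht.le)
  calc _ ≤ (2 * s)⁻¹ * (M / (s / 2) + M / (s / 2)) := by
        rw [abs_mul, abs_of_pos (by positivity)]
        gcongr
        exact (abs_add_le _ _).trans (add_le_add hI₁ hI₂)
    _ = 2 * K / lam * B * z ^ (1 + τ) := by
        rw [← sq_sqrt (hlam₀.le.trans hlam), ← hs_def, hM_def]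
        field_simp
        ring
    _ ≤ 2 * K / lam₀ * B * z ^ (2 + τ) := by
        gcongr <;> linarith

/-- The case `j_k = 0`, `λ_k > 0` of Lemma B.3: the particular solution of
`u″ − λu = z·v(z)` built by variation of parameters from `e^{±√λ z}` satisfies the weighted
bound `|u(z)| ≤ C B z^{2+τ}`, with `C` depending only on `λ₀` and `τ`. -/
theorem variation_of_parameters_exponential_bound (lam₀ τ : ℝ) (hlam₀ : 0 < lam₀)
    (hτ : τ < 0) :
    ∃ C : ℝ, 0 < C ∧
      ∀ lam w B : ℝ, lam₀ ≤ lam → 2 ≤ w → 0 ≤ B →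
      ∀ v : ℝ → ℝ, ContinuousOn v (Set.Ici w) →
      (∀ t, w ≤ t → |v t| ≤ B * t ^ τ) →
      ∀ z, w ≤ z →
        |(2 * Real.sqrt lam)⁻¹ *
            (Real.exp (-Real.sqrt lam * z) *
              (∫ t in w..z, Real.exp (Real.sqrt lam * t) * t * v t) +
             Real.exp (Real.sqrt lam * z) *
              (∫ t in Set.Ioi z, Real.exp (-Real.sqrt lam * t) * t * v t))|
          ≤ C * B * z ^ (2 + τ) :=
  variation_of_parameters_exponential_bound_general lam₀ τ hlam₀
end

section
/- Let d ∈ {2, 3}, λ > 0, and set c = √((d−2)² + 4λ), μ₊ = (−(d−2) + c)/2 and μ₋ = (−(d−2) − c)/2 (so μ± are the two roots of μ² + (d−2)μ − λ = 0). Let δ ∈ (0,1) satisfy μ₋ + d − δ > 0, let R ≥ 1, B ≥ 0, and let f : [R,∞) → ℝ be continuous with |f(t)| ≤ B·t^{−δ} for all t ≥ R. Define u(r) = (r^{μ₊}/c) ∫_R^r s^{μ₋ + d − 1} f(s) ds − (r^{μ₋}/c) ∫_R^r s^{μ₊ + d − 1} f(s) ds. Then u is twice continuously differentiable on (R,∞),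 satisfies u″(r) + ((d−1)/r)·u′(r) − (λ/r²)·u(r) = f(r) for all r > R, and |u(r)| ≤ (B/c)·( 1/(μ₋ + d − δ) + 1/(μ₊ + d − δ) )·r^{2−δ} for all r ≥ R. -/
/-!
Variation of parameters for the Euler operator `u″ + ((d−1)/r)u′ − (λ/r²)u`, whose homogeneous
solutions are `r^{μ±}`. Since `μ₊ + μ₋ = 2 − d`, the kernels `s^{μ∓+d−1}` are `s^{1−μ±}`, so
differentiating `r^{μ±} ∫_R^r s^{1−μ±} f` produces the boundary term `r f(r)` for both modes:
these cancel in `u′`, and in `u″` they leave `(μ₊ − μ₋) f / c = f`; the `r^{μ±}` terms then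
vanish because `μ±` are the indicial roots. For the bound, `|s^{1−μ} f(s)| ≤ B s^{1−μ−δ}`
integrates to at most `B r^{2−μ−δ}/(2−μ−δ)`, which is where `μ₋ + d − δ > 0` is needed.
-/

open intervalIntegral Set Filter Topology

section

variable {f : ℝ → ℝ} {R r : ℝ}

theorem hasDerivAt_integral_of_continuousOn_Ici (hf : ContinuousOn f (Ici R)) (hr : R < r) :
    HasDerivAt (fun t => ∫ s in R..t, f s) (f r) r :=
  integral_hasDerivAt_right
    ((hf.mono (uIcc_of_le hr.le ▸ Icc_subset_Ici_self)).intervalIntegrable)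
    ⟨Ici R, Ici_mem_nhds hr, hf.aestronglyMeasurable measurableSet_Ici⟩
    (hf.continuousAt (Ici_mem_nhds hr))

theorem continuousOn_rpow_const_mul (hR : 0 < R) (hf : ContinuousOn f (Ici R)) (ν : ℝ) :
    ContinuousOn (fun s => s ^ ν * f s) (Ici R) :=
  (continuousOn_id.rpow_const fun _ hs => Or.inl (hR.trans_le hs).ne').mul hf

theorem hasDerivAt_rpow_mul_integral_rpow_mul (hR : 0 < R) (hf : ContinuousOn f (Ici R))
    (hr : R < r) (e ν : ℝ) :
    HasDerivAt (fun t => t ^ e * ∫ s in R..t, s ^ ν * f s)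
      (e * r ^ (e - 1) * (∫ s in R..r, s ^ ν * f s) + r ^ (e + ν) * f r) r := by
  have hr0 : 0 < r := hR.trans hr
  refine ((Real.hasDerivAt_rpow_const (p := e) (Or.inl hr0.ne')).mul
    (hasDerivAt_integral_of_continuousOn_Ici (continuousOn_rpow_const_mul hR hf ν)
      hr)).congr_deriv ?_
  rw [Real.rpow_add hr0]
  ring

theorem abs_integral_rpow_mul_le {B δ ν : ℝ} (hR : 0 < R) (hB : 0 ≤ B)
    (hfb : ∀ t, R ≤ t → |f t| ≤ B * t ^ (-δ)) (hν : 0 < ν - δ + 1) (hr : R ≤ r) :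
    |∫ s in R..r, s ^ ν * f s| ≤ B * r ^ (ν - δ + 1) / (ν - δ + 1) := by
  have hbound : ∀ s ∈ Ioc R r, ‖s ^ ν * f s‖ ≤ B * s ^ (ν - δ) := fun s hs => by
    have hs0 : 0 < s := hR.trans hs.1
    rw [Real.norm_eq_abs, abs_mul, abs_of_nonneg (Real.rpow_nonneg hs0.le ν), sub_eq_add_neg,
      Real.rpow_add hs0]
    calc s ^ ν * |f s| ≤ s ^ ν * (B * s ^ (-δ)) := by gcongr; exact hfb s hs.1.le
      _ = B * (s ^ ν * s ^ (-δ)) := by ring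
  calc |∫ s in R..r, s ^ ν * f s| ≤ ∫ s in R..r, B * s ^ (ν - δ) :=
        norm_integral_le_of_norm_le hr (MeasureTheory.ae_of_all _ hbound)
          ((intervalIntegral.intervalIntegrable_rpow' (by linarith)).const_mul B)
    _ = B * ((r ^ (ν - δ + 1) - R ^ (ν - δ + 1)) / (ν - δ + 1)) := by
        rw [integral_const_mul, integral_rpow (Or.inl (by linarith))]
    _ ≤ B * r ^ (ν - δ + 1) / (ν - δ + 1) := by
        rw [mul_div_assoc]
        gcongr
        exact sub_le_self _ (Real.rpow_nonneg hR.le _)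

noncomputable def eulerSolution (μp μm R : ℝ) (f : ℝ → ℝ) (r : ℝ) : ℝ :=
  (r ^ μp * (∫ s in R..r, s ^ (1 - μp) * f s) - r ^ μm * ∫ s in R..r, s ^ (1 - μm) * f s)
    / (μp - μm)

variable {μp μm : ℝ}

theorem hasDerivAt_eulerSolution (hR : 0 < R) (hf : ContinuousOn f (Ici R)) (hr : R < r) :
    HasDerivAt (eulerSolution μp μm R f)
      ((μp * (r ^ (μp - 1) * ∫ s in R..r, s ^ (1 - μp) * f s)
        - μm * (r ^ (μm - 1) * ∫ s in R..r, s ^ (1 - μm) * f s)) / (μp - μm)) r := by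
  refine (((hasDerivAt_rpow_mul_integral_rpow_mul hR hf hr μp (1 - μp)).sub
    (hasDerivAt_rpow_mul_integral_rpow_mul hR hf hr μm (1 - μm))).div_const _).congr_deriv ?_
  rw [add_sub_cancel, add_sub_cancel]
  ring

theorem hasDerivAt_deriv_eulerSolution (hR : 0 < R) (hf : ContinuousOn f (Ici R))
    (hne : μp ≠ μm) (hr : R < r) :
    HasDerivAt (deriv (eulerSolution μp μm R f))
      ((μp * (μp - 1) * (r ^ (μp - 2) * ∫ s in R..r, s ^ (1 - μp) * f s)
        - μm * (μm - 1) * (r ^ (μm - 2) * ∫ s in R..r, s ^ (1 - μm) * f s)) / (μp - μm)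
        + f r) r := by
  have hderiv : deriv (eulerSolution μp μm R f) =ᶠ[𝓝 r] fun t =>
      (μp * (t ^ (μp - 1) * ∫ s in R..t, s ^ (1 - μp) * f s)
        - μm * (t ^ (μm - 1) * ∫ s in R..t, s ^ (1 - μm) * f s)) / (μp - μm) :=
    eventually_of_mem (Ioi_mem_nhds hr) fun t ht => (hasDerivAt_eulerSolution hR hf ht).deriv
  refine ((((hasDerivAt_rpow_mul_integral_rpow_mul hR hf hr (μp - 1) (1 - μp)).const_mul μp).sub
    ((hasDerivAt_rpow_mul_integral_rpow_mul hR hf hr (μm - 1) (1 - μm)).const_mul μm)).div_const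
    _).congr_of_eventuallyEq hderiv |>.congr_deriv ?_
  rw [sub_add_sub_cancel, sub_add_sub_cancel, sub_self, sub_self, Real.rpow_zero, one_mul,
    sub_sub, sub_sub, one_add_one_eq_two]
  field_simp [sub_ne_zero.2 hne]
  ring

theorem contDiffOn_eulerSolution (hR : 0 < R) (hf : ContinuousOn f (Ici R)) (hne : μp ≠ μm) :
    ContDiffOn ℝ 2 (eulerSolution μp μm R f) (Ioi R) := by
  have hpow (e : ℝ) : ContinuousOn (fun t : ℝ => t ^ e) (Ioi R) :=
    continuousOn_id.rpow_const fun _ ht => Or.inl (hR.trans ht).ne'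
  have hprim (ν : ℝ) : ContinuousOn (fun t => ∫ s in R..t, s ^ ν * f s) (Ioi R) := fun _ ht =>
    (hasDerivAt_integral_of_continuousOn_Ici (continuousOn_rpow_const_mul hR hf ν)
      ht).continuousAt.continuousWithinAt
  have hsecond : ContinuousOn (deriv (deriv (eulerSolution μp μm R f))) (Ioi R) := by
    refine ContinuousOn.congr ?_ fun r hr => (hasDerivAt_deriv_eulerSolution hR hf hne hr).deriv
    exact (((continuousOn_const.mul ((hpow _).mul (hprim _))).sub
      (continuousOn_const.mul ((hpow _).mul (hprim _)))).div_const _).add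
      (hf.mono Ioi_subset_Ici_self)
  rw [show (2 : WithTop ℕ∞) = 1 + 1 from rfl, contDiffOn_succ_iff_deriv_of_isOpen isOpen_Ioi]
  refine ⟨fun r hr => (hasDerivAt_eulerSolution hR hf hr).differentiableAt.differentiableWithinAt,
    by simp, ?_⟩
  rw [show (1 : WithTop ℕ∞) = 0 + 1 from rfl, contDiffOn_succ_iff_deriv_of_isOpen isOpen_Ioi]
  exact ⟨fun r hr =>
      (hasDerivAt_deriv_eulerSolution hR hf hne hr).differentiableAt.differentiableWithinAt,
    by simp, contDiffOn_zero.2 hsecond⟩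

theorem eulerSolution_ode {d lam : ℝ} (hp : μp ^ 2 + (d - 2) * μp - lam = 0)
    (hm : μm ^ 2 + (d - 2) * μm - lam = 0) (hR : 0 < R) (hf : ContinuousOn f (Ici R))
    (hne : μp ≠ μm) (hr : R < r) :
    deriv (deriv (eulerSolution μp μm R f)) r
      + ((d - 1) / r) * deriv (eulerSolution μp μm R f) r
      - (lam / r ^ 2) * eulerSolution μp μm R f r = f r := by
  have hr0 : 0 < r := hR.trans hr
  have hpow_sub_one (μ : ℝ) : r ^ (μ - 1) = r ^ μ / r := by
    rw [Real.rpow_sub hr0, Real.rpow_one]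
  have hpow_sub_two (μ : ℝ) : r ^ (μ - 2) = r ^ μ / r ^ 2 := by
    rw [Real.rpow_sub hr0, Real.rpow_two]
  rw [(hasDerivAt_deriv_eulerSolution hR hf hne hr).deriv,
    (hasDerivAt_eulerSolution hR hf hr).deriv, eulerSolution, hpow_sub_one, hpow_sub_one,
    hpow_sub_two, hpow_sub_two]
  field_simp [sub_ne_zero.2 hne]
  linear_combination (r ^ μp * ∫ s in R..r, s ^ (1 - μp) * f s) * hp
    - (r ^ μm * ∫ s in R..r, s ^ (1 - μm) * f s) * hm

theorem abs_eulerSolution_le {B δ : ℝ} (hR : 0 < R) (hB : 0 ≤ B)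
    (hfb : ∀ t, R ≤ t → |f t| ≤ B * t ^ (-δ)) (hlt : μm < μp) (hδ : 0 < 2 - μp - δ)
    (hr : R ≤ r) :
    |eulerSolution μp μm R f r| ≤ B / (μp - μm) * (1 / (2 - μp - δ) + 1 / (2 - μm - δ))
      * r ^ (2 - δ) := by
  have hr0 : 0 < r := hR.trans_le hr
  have hbound (μ : ℝ) (hμ : 0 < 2 - μ - δ) :
      r ^ μ * |∫ s in R..r, s ^ (1 - μ) * f s| ≤ B / (2 - μ - δ) * r ^ (2 - δ) := by
    have h := abs_integral_rpow_mul_le (ν := 1 - μ) hR hB hfb (by linarith) hr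
    rw [show 1 - μ - δ + 1 = 2 - μ - δ by ring] at h
    calc r ^ μ * |∫ s in R..r, s ^ (1 - μ) * f s|
        ≤ r ^ μ * (B * r ^ (2 - μ - δ) / (2 - μ - δ)) := by gcongr
      _ = B / (2 - μ - δ) * r ^ (2 - δ) := by
          rw [show 2 - δ = μ + (2 - μ - δ) by ring, Real.rpow_add hr0]
          ring
  have hc : 0 < μp - μm := sub_pos.2 hlt
  set P := ∫ s in R..r, s ^ (1 - μp) * f s
  set M := ∫ s in R..r, s ^ (1 - μm) * f s
  rw [eulerSolution, abs_div, abs_of_pos hc, div_le_iff₀ hc]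
  calc |r ^ μp * P - r ^ μm * M| ≤ |r ^ μp * P| + |r ^ μm * M| := abs_sub _ _
    _ = r ^ μp * |P| + r ^ μm * |M| := by
        rw [abs_mul, abs_mul, abs_of_pos (Real.rpow_pos_of_pos hr0 μp),
          abs_of_pos (Real.rpow_pos_of_pos hr0 μm)]
    _ ≤ B / (2 - μp - δ) * r ^ (2 - δ) + B / (2 - μm - δ) * r ^ (2 - δ) :=
        add_le_add (hbound μp hδ) (hbound μm (by linarith))
    _ = _ := by field_simp

end

theorem radial_poisson_nonzero_mode_general (d : ℕ)
    (lam : ℝ) (hlam : 0 < lam) (c μp μm : ℝ)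
    (hc : c = Real.sqrt (((d : ℝ) - 2) ^ 2 + 4 * lam))
    (hμp : μp = (-((d : ℝ) - 2) + c) / 2)
    (hμm : μm = (-((d : ℝ) - 2) - c) / 2)
    (δ R B : ℝ) (hδ' : 0 < μm + (d : ℝ) - δ)
    (hR : 1 ≤ R) (hB : 0 ≤ B)
    (f : ℝ → ℝ) (hf : ContinuousOn f (Set.Ici R))
    (hfb : ∀ t, R ≤ t → |f t| ≤ B * t ^ (-δ))
    (u : ℝ → ℝ)
    (hu : ∀ r, u r =
      (r ^ μp / c) * (∫ s in R..r, s ^ (μm + (d : ℝ) - 1) * f s)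
        - (r ^ μm / c) * (∫ s in R..r, s ^ (μp + (d : ℝ) - 1) * f s)) :
    ContDiffOn ℝ 2 u (Set.Ioi R) ∧
    (∀ r, R < r →
      deriv (deriv u) r + (((d : ℝ) - 1) / r) * deriv u r - (lam / r ^ 2) * u r = f r) ∧
    (∀ r, R ≤ r →
      |u r| ≤ (B / c) * (1 / (μm + (d : ℝ) - δ) + 1 / (μp + (d : ℝ) - δ)) * r ^ (2 - δ)) := by
  have hR0 : 0 < R := by linarith
  have hc0 : 0 < c := hc ▸ Real.sqrt_pos.2 (by positivity)
  have hcsq : c ^ 2 = ((d : ℝ) - 2) ^ 2 + 4 * lam := hc ▸ Real.sq_sqrt (by positivity)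
  have hdiff : μp - μm = c := by rw [hμp, hμm]; ring
  have hne : μp ≠ μm := sub_ne_zero.1 (hdiff ▸ hc0.ne')
  have hrootp : μp ^ 2 + ((d : ℝ) - 2) * μp - lam = 0 := by
    rw [hμp]; linear_combination hcsq / 4
  have hrootm : μm ^ 2 + ((d : ℝ) - 2) * μm - lam = 0 := by
    rw [hμm]; linear_combination hcsq / 4
  have hexpp : μm + (d : ℝ) - 1 = 1 - μp := by linarith
  have hexpm : μp + (d : ℝ) - 1 = 1 - μm := by linarith
  obtain rfl : u = eulerSolution μp μm R f := funext fun r => by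
    rw [hu, eulerSolution, hexpp, hexpm, hdiff]; ring
  refine ⟨contDiffOn_eulerSolution hR0 hf hne,
    fun r hr => eulerSolution_ode hrootp hrootm hR0 hf hne hr, fun r hr => ?_⟩
  have hbound := abs_eulerSolution_le hR0 hB hfb (by linarith : μm < μp)
    (by linarith : 0 < 2 - μp - δ) hr
  rwa [show 2 - μp - δ = μm + (d : ℝ) - δ by linarith,
    show 2 - μm - δ = μp + (d : ℝ) - δ by linarith, hdiff] at hbound

/-- The nonzero-mode step in Proposition 6.5: for an eigenvalue `λ > 0` with indicial roots
`μ± = (−(d−2) ± √((d−2)²+4λ))/2`, the variation-of-parameters solution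
`u(r) = (r^{μ₊}/c) ∫_R^r s^{μ₋+d−1} f − (r^{μ₋}/c) ∫_R^r s^{μ₊+d−1} f`
is a `C²` solution of `u″ + ((d−1)/r)u′ − (λ/r²)u = f` on `(R,∞)` with
`|u(r)| ≤ (B/c)(1/(μ₋+d−δ) + 1/(μ₊+d−δ)) r^{2−δ}`. -/
theorem radial_poisson_nonzero_mode (d : ℕ) (hd : d = 2 ∨ d = 3)
    (lam : ℝ) (hlam : 0 < lam) (c μp μm : ℝ)
    (hc : c = Real.sqrt (((d : ℝ) - 2) ^ 2 + 4 * lam))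
    (hμp : μp = (-((d : ℝ) - 2) + c) / 2)
    (hμm : μm = (-((d : ℝ) - 2) - c) / 2)
    (δ R B : ℝ) (hδ : δ ∈ Set.Ioo (0 : ℝ) 1) (hδ' : 0 < μm + (d : ℝ) - δ)
    (hR : 1 ≤ R) (hB : 0 ≤ B)
    (f : ℝ → ℝ) (hf : ContinuousOn f (Set.Ici R))
    (hfb : ∀ t, R ≤ t → |f t| ≤ B * t ^ (-δ))
    (u : ℝ → ℝ)
    (hu : ∀ r, u r =
      (r ^ μp / c) * (∫ s in R..r, s ^ (μm + (d : ℝ) - 1) * f s)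
        - (r ^ μm / c) * (∫ s in R..r, s ^ (μp + (d : ℝ) - 1) * f s)) :
    ContDiffOn ℝ 2 u (Set.Ioi R) ∧
    (∀ r, R < r →
      deriv (deriv u) r + (((d : ℝ) - 1) / r) * deriv u r - (lam / r ^ 2) * u r = f r) ∧
    (∀ r, R ≤ r →
      |u r| ≤ (B / c) * (1 / (μm + (d : ℝ) - δ) + 1 / (μp + (d : ℝ) - δ)) * r ^ (2 - δ)) :=
  radial_poisson_nonzero_mode_general d lam hlam c μp μm hc hμp hμm δ R B hδ' hR hB f hf hfb u hu
end
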